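/- arXiv:1501.01419 — 3 statements merged into one kernel-verified Lean document; each statement's English description precedes it below -/
import Mathlib

section
/- Let F : ℝⁿ → S^p be a symmetric polynomial matrix, f its largest eigenvalue function, and x̄ ∈ ℝⁿ. For every ε > 0 there exists a constant c > 0 and an exponent α > 0 such that for all x with ‖x − x̄‖ ≤ ε and all v ∈ E(x), dist(v, E(x̄)) ≤ c ‖x − x̄‖^α; that is, E(x) ⊆ E(x̄) + c‖x − x̄‖^α 𝔹. -/
open Metric Set Filter Topology

/-AUXSTART-/

lemma contDiff_mvpoly {n : ℕ} (P : MvPolynomial (Fin n) ℝ) :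
    ContDiff ℝ (⊤ : ℕ∞) (fun x : EuclideanSpace ℝ (Fin n) => MvPolynomial.eval (fun k => x k) P) := by
  induction P using MvPolynomial.induction_on with
  | C a => simpa using contDiff_const
  | add p q hp hq => simpa using hp.add hq
  | mul_X p k hp =>
      simpa using hp.mul ((EuclideanSpace.proj k : EuclideanSpace ℝ (Fin n) →L[ℝ] ℝ).contDiff)

lemma lip_of_contDiff {n : ℕ} (g : EuclideanSpace ℝ (Fin n) → ℝ) (hg : ContDiff ℝ (⊤ : ℕ∞) g)
    (xbar : EuclideanSpace ℝ (Fin n)) (ε : ℝ) :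
    ∃ C : ℝ, 0 ≤ C ∧ ∀ x ∈ closedBall xbar ε, |g x - g xbar| ≤ C * ‖x - xbar‖ := by
  have hder : Continuous fun x => ‖fderiv ℝ g x‖ :=
    (hg.continuous_fderiv (by simp)).norm
  obtain ⟨C, hC⟩ := (isCompact_closedBall xbar ε).exists_bound_of_continuousOn
    hder.continuousOn
  refine ⟨max C 0, le_max_right _ _, fun x hx => ?_⟩
  rcases le_or_gt ε 0 with hε | hε
  · have hx' : x = xbar := by
      have := mem_closedBall.mp hx
      have : dist x xbar ≤ 0 := this.trans hε
      simpa using le_antisymm this dist_nonneg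
    simp [hx']
  · have := Convex.norm_image_sub_le_of_norm_fderiv_le (C := max C 0)
      (fun y (_ : y ∈ closedBall xbar ε) => (hg.differentiable (by simp)).differentiableAt)
      (fun y hy => le_trans (by simpa using hC y hy) (le_max_left _ _))
      (convex_closedBall xbar ε) (mem_closedBall_self hε.le) hx
    simpa [Real.norm_eq_abs] using this

/-AUXEND-/

/-- `μ` is the largest eigenvalue of the matrix `A`. -/
def IsLargestEigenvalue {ι : Type*} [Fintype ι] (A : Matrix ι ι ℝ) (μ : ℝ) : Prop :=
  IsGreatest {t : ℝ | ∃ v : EuclideanSpace ℝ ι, v ≠ 0 ∧ ∀ i, ∑ j, A i j * v j = t * v i} μ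

/-- The set of unit eigenvectors of `F x` corresponding to the value `f x`. -/
def unitEigenvectors {n p : ℕ} (F : EuclideanSpace ℝ (Fin n) → Matrix (Fin p) (Fin p) ℝ)
    (f : EuclideanSpace ℝ (Fin n) → ℝ) (x : EuclideanSpace ℝ (Fin n)) :
    Set (EuclideanSpace ℝ (Fin p)) :=
  {v | ‖v‖ = 1 ∧ ∀ i, ∑ j, F x i j * v j = f x * v i}


variable {p : ℕ}

lemma toEuc_apply (M : Matrix (Fin p) (Fin p) ℝ) (v : EuclideanSpace ℝ (Fin p)) (i : Fin p) :
    Matrix.toEuclideanLin M v i = ∑ j, M i j * v j := by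
  simp [Matrix.toEuclideanLin_apply, Matrix.mulVec, dotProduct]

lemma eig_iff (M : Matrix (Fin p) (Fin p) ℝ) (v : EuclideanSpace ℝ (Fin p)) (t : ℝ) :
    (∀ i, ∑ j, M i j * v j = t * v i) ↔ Matrix.toEuclideanLin M v = t • v := by
  constructor
  · intro h
    ext i
    rw [toEuc_apply, h i]; rfl
  · intro h i
    have := congrArg (· i) h
    rw [toEuc_apply] at this
    exact this

lemma inner_toEuc (M : Matrix (Fin p) (Fin p) ℝ) (v u : EuclideanSpace ℝ (Fin p)) :
    inner ℝ (Matrix.toEuclideanLin M v) u = ∑ i, (∑ j, M i j * v j) * u i := by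
  rw [PiLp.inner_apply]
  simp [toEuc_apply, RCLike.inner_apply]
  exact Finset.sum_congr rfl fun i _ => mul_comm _ _

lemma symm_toEuc (M : Matrix (Fin p) (Fin p) ℝ) (hsym : ∀ i j, M i j = M j i) :
    (Matrix.toEuclideanLin M).IsSymmetric := by
  intro v u
  rw [inner_toEuc, PiLp.inner_apply]
  simp only [RCLike.inner_apply, starRingEnd_apply, star_trivial, toEuc_apply,
    Finset.sum_mul, Finset.mul_sum]
  rw [Finset.sum_comm]
  refine Finset.sum_congr rfl fun i _ => Finset.sum_congr rfl fun j _ => ?_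
  rw [hsym]
  ring

lemma coord_le_norm (v : EuclideanSpace ℝ (Fin p)) (j : Fin p) : |v j| ≤ ‖v‖ := by
  rw [EuclideanSpace.norm_eq]
  rw [← Real.sqrt_sq_eq_abs]
  apply Real.sqrt_le_sqrt
  have : (v j)^2 = ‖v j‖^2 := by rw [Real.norm_eq_abs, sq_abs]
  rw [this]
  exact Finset.single_le_sum (f := fun i => ‖v i‖^2) (fun i _ => sq_nonneg _) (Finset.mem_univ j)

lemma norm_le_sqrt_card_mul (w : EuclideanSpace ℝ (Fin p)) (B : ℝ) (hB : ∀ i, |w i| ≤ B) :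
    ‖w‖ ≤ Real.sqrt p * B := by
  rcases Nat.eq_zero_or_pos p with hp | hp
  · subst hp
    have : w = 0 := Subsingleton.elim _ _
    simp [this]
  have hB0 : 0 ≤ B := le_trans (abs_nonneg _) (hB ⟨0, hp⟩)
  rw [EuclideanSpace.norm_eq]
  calc Real.sqrt (∑ i, ‖w i‖^2) ≤ Real.sqrt (∑ _i : Fin p, B^2) := by
        apply Real.sqrt_le_sqrt
        apply Finset.sum_le_sum
        intro i _
        rw [Real.norm_eq_abs]
        exact pow_le_pow_left₀ (abs_nonneg _) (hB i) 2
    _ = Real.sqrt p * B := by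
        rw [Finset.sum_const, Finset.card_univ, Fintype.card_fin, nsmul_eq_mul,
          Real.sqrt_mul (by positivity), Real.sqrt_sq hB0]

lemma toEuc_norm_bound (M : Matrix (Fin p) (Fin p) ℝ) (v : EuclideanSpace ℝ (Fin p)) :
    ‖Matrix.toEuclideanLin M v‖ ≤ (Real.sqrt p * ∑ i, ∑ j, |M i j|) * ‖v‖ := by
  have key : ∀ i, |Matrix.toEuclideanLin M v i| ≤ (∑ i, ∑ j, |M i j|) * ‖v‖ := by
    intro i
    rw [toEuc_apply]
    calc |∑ j, M i j * v j| ≤ ∑ j, |M i j * v j| := Finset.abs_sum_le_sum_abs _ _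
      _ ≤ ∑ j, |M i j| * ‖v‖ := by
          apply Finset.sum_le_sum; intro j _
          rw [abs_mul]
          exact mul_le_mul_of_nonneg_left (coord_le_norm v j) (abs_nonneg _)
      _ = (∑ j, |M i j|) * ‖v‖ := by rw [Finset.sum_mul]
      _ ≤ (∑ i, ∑ j, |M i j|) * ‖v‖ := by
          apply mul_le_mul_of_nonneg_right _ (norm_nonneg _)
          exact Finset.single_le_sum (f := fun i => ∑ j, |M i j|)
            (fun i _ => Finset.sum_nonneg fun j _ => abs_nonneg _) (Finset.mem_univ i)
  have := norm_le_sqrt_card_mul (Matrix.toEuclideanLin M v) _ key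
  linarith [this]

lemma rayleigh_le (hp : 0 < p) (T : EuclideanSpace ℝ (Fin p) →ₗ[ℝ] EuclideanSpace ℝ (Fin p))
    (hT : T.IsSymmetric) (μ : ℝ)
    (hμ : ∀ t : ℝ, (∃ v : EuclideanSpace ℝ (Fin p), v ≠ 0 ∧ T v = t • v) → t ≤ μ)
    (v : EuclideanSpace ℝ (Fin p)) :
    inner ℝ (T v) v ≤ μ * ‖v‖ ^ 2 := by
  haveI : Nontrivial (EuclideanSpace ℝ (Fin p)) := by
    refine nontrivial_of_ne (EuclideanSpace.single ⟨0, hp⟩ 1) 0 ?_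
    intro h
    have := congrArg (· ⟨0, hp⟩) h
    simp [EuclideanSpace.single_apply] at this
  set s : ℝ := ⨆ x : { x : EuclideanSpace ℝ (Fin p) // x ≠ 0 },
    RCLike.re (inner ℝ (T ↑x) ↑x : ℝ) / ‖(↑x : EuclideanSpace ℝ (Fin p))‖ ^ 2 with hs
  have heig : Module.End.HasEigenvalue T s := hT.hasEigenvalue_iSup_of_finiteDimensional
  obtain ⟨w, hw⟩ := heig.exists_hasEigenvector
  have hsμ : s ≤ μ := hμ s ⟨w, hw.2, Module.End.mem_eigenspace_iff.mp hw.1⟩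
  rcases eq_or_ne v 0 with rfl | hv
  · simp
  · set T' := LinearMap.toContinuousLinearMap T
    have hre : ∀ u : EuclideanSpace ℝ (Fin p),
        RCLike.re (inner ℝ (T u) u : ℝ) = inner ℝ (T u) u := fun u => rfl
    have hbdd : BddAbove (Set.range fun x : { x : EuclideanSpace ℝ (Fin p) // x ≠ 0 } =>
        RCLike.re (inner ℝ (T ↑x) ↑x : ℝ) / ‖(↑x : EuclideanSpace ℝ (Fin p))‖ ^ 2) := by
      refine ⟨‖T'‖, ?_⟩
      rintro _ ⟨x, rfl⟩
      have hx : (0:ℝ) < ‖(x : EuclideanSpace ℝ (Fin p))‖ ^ 2 :=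
        pow_pos (norm_pos_iff.mpr x.2) 2
      show RCLike.re (inner ℝ (T ↑x) ↑x : ℝ) / ‖(↑x : EuclideanSpace ℝ (Fin p))‖ ^ 2 ≤ ‖T'‖
      rw [hre, div_le_iff₀ hx]
      calc (inner ℝ (T (x : EuclideanSpace ℝ (Fin p))) x : ℝ)
          ≤ ‖T (x : EuclideanSpace ℝ (Fin p))‖ * ‖(x : EuclideanSpace ℝ (Fin p))‖ :=
            real_inner_le_norm _ _
        _ ≤ (‖T'‖ * ‖(x : EuclideanSpace ℝ (Fin p))‖) * ‖(x : EuclideanSpace ℝ (Fin p))‖ := by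
            have h2 : ‖T (x : EuclideanSpace ℝ (Fin p))‖
                = ‖T' (x : EuclideanSpace ℝ (Fin p))‖ := rfl
            rw [h2]
            exact mul_le_mul_of_nonneg_right (T'.le_opNorm _) (norm_nonneg _)
        _ = ‖T'‖ * ‖(x : EuclideanSpace ℝ (Fin p))‖ ^ 2 := by ring
    have hle : RCLike.re (inner ℝ (T v) v : ℝ) / ‖v‖ ^ 2 ≤ s := le_ciSup hbdd ⟨v, hv⟩
    rw [hre] at hle
    have hv2 : (0:ℝ) < ‖v‖ ^ 2 := pow_pos (norm_pos_iff.mpr hv) 2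
    have hfin : (inner ℝ (T v) v : ℝ) / ‖v‖ ^ 2 ≤ μ := le_trans hle hsμ
    calc (inner ℝ (T v) v : ℝ) = (inner ℝ (T v) v / ‖v‖ ^ 2) * ‖v‖ ^ 2 := by
          field_simp
      _ ≤ μ * ‖v‖ ^ 2 := mul_le_mul_of_nonneg_right hfin hv2.le

lemma gap_bound (T : EuclideanSpace ℝ (Fin p) →ₗ[ℝ] EuclideanSpace ℝ (Fin p))
    (hT : T.IsSymmetric) (lam : ℝ) :
    ∃ γ : ℝ, 0 < γ ∧ ∀ w ∈ (Module.End.eigenspace T lam)ᗮ,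
      γ * ‖w‖ ≤ ‖T w - lam • w‖ := by
  set V := Module.End.eigenspace T lam with hV
  set S : EuclideanSpace ℝ (Fin p) →ₗ[ℝ] EuclideanSpace ℝ (Fin p) :=
    T - lam • LinearMap.id with hS
  have hSapp : ∀ w, S w = T w - lam • w := by
    intro w
    simp [hS]
  have hmap : ∀ w ∈ Vᗮ, S w ∈ Vᗮ := by
    intro w hw
    rw [Submodule.mem_orthogonal]
    intro u hu
    have hTu : T u = lam • u := Module.End.mem_eigenspace_iff.mp hu
    have h1 : (inner ℝ u (S w) : ℝ) = inner ℝ u (T w) - lam * inner ℝ u w := by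
      rw [hSapp, inner_sub_right, real_inner_smul_right]
    rw [h1, ← hT u w, hTu, real_inner_smul_left]
    ring
  have hinj : Function.Injective (S.restrict hmap) := by
    rw [← LinearMap.ker_eq_bot, Submodule.eq_bot_iff]
    rintro ⟨w, hw⟩ hker
    have hSw : S w = 0 := by
      have := congrArg (Subtype.val) (LinearMap.mem_ker.mp hker)
      simpa [LinearMap.restrict_apply] using this
    have hwV : w ∈ V := by
      rw [hV, Module.End.mem_eigenspace_iff]
      have h0 : T w - lam • w = 0 := by rw [← hSapp]; exact hSw
      exact sub_eq_zero.mp h0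
    have hw0 : w = 0 := by
      have hmem : w ∈ V ⊓ Vᗮ := Submodule.mem_inf.mpr ⟨hwV, hw⟩
      have := (Submodule.orthogonal_disjoint V).le_bot hmem
      simpa using this
    exact Subtype.ext hw0
  have hsurj : Function.Surjective (S.restrict hmap) :=
    (LinearMap.injective_iff_surjective).mp hinj
  let e : Vᗮ ≃ₗ[ℝ] Vᗮ := LinearEquiv.ofBijective (S.restrict hmap) ⟨hinj, hsurj⟩
  let e' := e.toContinuousLinearEquiv
  obtain ⟨K, hK⟩ : ∃ K : NNReal, AntilipschitzWith K e' := ⟨_, e'.antilipschitz⟩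
  refine ⟨((K : ℝ) + 1)⁻¹, by positivity, ?_⟩
  intro w hw
  set ww : Vᗮ := ⟨w, hw⟩
  have h1 : ‖ww‖ ≤ (K : ℝ) * ‖e' ww‖ := by
    have := hK.le_mul_dist ww 0
    simpa [dist_eq_norm] using this
  have h2 : ‖e' ww‖ = ‖T w - lam • w‖ := by
    have : ((e' ww : Vᗮ) : EuclideanSpace ℝ (Fin p)) = S w := rfl
    rw [show ‖e' ww‖ = ‖((e' ww : Vᗮ) : EuclideanSpace ℝ (Fin p))‖ from rfl, this, hSapp]
  have h3 : ‖ww‖ = ‖w‖ := rfl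
  rw [h2, h3] at h1
  rw [inv_mul_le_iff₀ (by positivity)]
  calc ‖w‖ ≤ (K : ℝ) * ‖T w - lam • w‖ := h1
    _ ≤ ((K : ℝ) + 1) * ‖T w - lam • w‖ := by
        apply mul_le_mul_of_nonneg_right _ (norm_nonneg _)
        linarith

lemma unit_eig_mem {n p : ℕ} (F : EuclideanSpace ℝ (Fin n) → Matrix (Fin p) (Fin p) ℝ)
    (f : EuclideanSpace ℝ (Fin n) → ℝ) (x : EuclideanSpace ℝ (Fin n))
    (v : EuclideanSpace ℝ (Fin p)) :
    v ∈ unitEigenvectors F f x ↔ ‖v‖ = 1 ∧ Matrix.toEuclideanLin (F x) v = f x • v := by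
  unfold unitEigenvectors
  rw [Set.mem_setOf_eq, eig_iff]

lemma exists_unit_eig {n p : ℕ} (F : EuclideanSpace ℝ (Fin n) → Matrix (Fin p) (Fin p) ℝ)
    (f : EuclideanSpace ℝ (Fin n) → ℝ) (hf : ∀ x, IsLargestEigenvalue (F x) (f x))
    (x : EuclideanSpace ℝ (Fin n)) : ∃ u, u ∈ unitEigenvectors F f x := by
  obtain ⟨v, hv0, hveig⟩ := (hf x).1
  refine ⟨‖v‖⁻¹ • v, ?_⟩
  rw [unit_eig_mem]
  have hvn : ‖v‖ ≠ 0 := norm_ne_zero_iff.mpr hv0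
  constructor
  · rw [norm_smul, norm_inv, norm_norm, inv_mul_cancel₀ hvn]
  · have hTv : Matrix.toEuclideanLin (F x) v = f x • v := (eig_iff _ _ _).mp hveig
    rw [map_smul, hTv, smul_comm]

set_option maxHeartbeats 2000000

/-- Hölder stability of the set of leading unit eigenvectors:
for every `ε > 0` there are `c > 0` and `α > 0` such that
`E(x) ⊆ E(xbar) + c‖x − xbar‖^α 𝔹` for all `‖x − xbar‖ ≤ ε`. -/
theorem unitEigenvectors_holder_stability {n p : ℕ}
    (F : EuclideanSpace ℝ (Fin n) → Matrix (Fin p) (Fin p) ℝ)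
    (f : EuclideanSpace ℝ (Fin n) → ℝ)
    (hpoly : ∀ i j, ∃ P : MvPolynomial (Fin n) ℝ,
      ∀ x : EuclideanSpace ℝ (Fin n), F x i j = MvPolynomial.eval (fun k => x k) P)
    (hsym : ∀ x i j, F x i j = F x j i)
    (hf : ∀ x, IsLargestEigenvalue (F x) (f x))
    (xbar : EuclideanSpace ℝ (Fin n)) :
    ∀ ε > (0 : ℝ), ∃ c > (0 : ℝ), ∃ α > (0 : ℝ),
      ∀ x : EuclideanSpace ℝ (Fin n), ‖x - xbar‖ ≤ ε →
        ∀ v ∈ unitEigenvectors F f x,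
          Metric.infDist v (unitEigenvectors F f xbar) ≤ c * ‖x - xbar‖ ^ α := by
  intro ε hε
  -- the case p = 0 is vacuous/contradictory
  rcases Nat.eq_zero_or_pos p with hp0 | hp
  · exfalso
    obtain ⟨v, hv0, -⟩ := (hf xbar).1
    subst hp0
    exact hv0 (Subsingleton.elim _ _)
  -- entrywise Lipschitz constants
  have hentry : ∀ i j : Fin p, ∃ C : ℝ, 0 ≤ C ∧
      ∀ x ∈ closedBall xbar ε, |F x i j - F xbar i j| ≤ C * ‖x - xbar‖ := by
    intro i j
    obtain ⟨P, hP⟩ := hpoly i j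
    obtain ⟨C, hC0, hC⟩ := lip_of_contDiff _ (contDiff_mvpoly P) xbar ε
    exact ⟨C, hC0, fun x hx => by rw [hP, hP]; exact hC x hx⟩
  choose C hC0 hC using hentry
  set L : ℝ := Real.sqrt p * (∑ i, ∑ j, C i j) + 1 with hLdef
  have hL1 : (1:ℝ) ≤ L := by
    have : 0 ≤ Real.sqrt p * (∑ i, ∑ j, C i j) := by
      apply mul_nonneg (Real.sqrt_nonneg _)
      exact Finset.sum_nonneg fun i _ => Finset.sum_nonneg fun j _ => hC0 i j
    linarith
  have hL0 : (0:ℝ) < L := lt_of_lt_of_le one_pos hL1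
  -- operator Lipschitz bound
  have hFlip : ∀ x ∈ closedBall xbar ε, ∀ v : EuclideanSpace ℝ (Fin p),
      ‖Matrix.toEuclideanLin (F x) v - Matrix.toEuclideanLin (F xbar) v‖
        ≤ L * ‖x - xbar‖ * ‖v‖ := by
    intro x hx v
    have h1 : Matrix.toEuclideanLin (F x) v - Matrix.toEuclideanLin (F xbar) v
        = Matrix.toEuclideanLin (F x - F xbar) v := by
      rw [map_sub]
      rfl
    rw [h1]
    calc ‖Matrix.toEuclideanLin (F x - F xbar) v‖
        ≤ (Real.sqrt p * ∑ i, ∑ j, |(F x - F xbar) i j|) * ‖v‖ := toEuc_norm_bound _ _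
      _ ≤ (Real.sqrt p * ((∑ i, ∑ j, C i j) * ‖x - xbar‖)) * ‖v‖ := by
          apply mul_le_mul_of_nonneg_right _ (norm_nonneg _)
          apply mul_le_mul_of_nonneg_left _ (Real.sqrt_nonneg _)
          rw [Finset.sum_mul]
          apply Finset.sum_le_sum
          intro i _
          rw [Finset.sum_mul]
          apply Finset.sum_le_sum
          intro j _
          exact hC i j x hx
      _ ≤ L * ‖x - xbar‖ * ‖v‖ := by
          apply mul_le_mul_of_nonneg_right _ (norm_nonneg _)
          have hd0 : (0:ℝ) ≤ ‖x - xbar‖ := norm_nonneg _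
          have : Real.sqrt p * ((∑ i, ∑ j, C i j) * ‖x - xbar‖)
              = (Real.sqrt p * (∑ i, ∑ j, C i j)) * ‖x - xbar‖ := by ring
          rw [this]
          apply mul_le_mul_of_nonneg_right _ hd0
          rw [hLdef]; linarith
  -- symmetry and Rayleigh bounds
  have hTsym : ∀ x, (Matrix.toEuclideanLin (F x)).IsSymmetric :=
    fun x => symm_toEuc _ (hsym x)
  have hμub : ∀ x, ∀ t : ℝ, (∃ v : EuclideanSpace ℝ (Fin p), v ≠ 0 ∧
      Matrix.toEuclideanLin (F x) v = t • v) → t ≤ f x := by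
    intro x t ⟨v, hv0, hveig⟩
    exact (hf x).2 ⟨v, hv0, (eig_iff _ _ _).mpr hveig⟩
  have hray : ∀ x, ∀ v : EuclideanSpace ℝ (Fin p),
      inner ℝ (Matrix.toEuclideanLin (F x) v) v ≤ f x * ‖v‖ ^ 2 :=
    fun x v => rayleigh_le hp _ (hTsym x) _ (hμub x) v
  -- f is Lipschitz on the ball
  have hflip : ∀ x ∈ closedBall xbar ε, |f x - f xbar| ≤ L * ‖x - xbar‖ := by
    intro x hx
    have key : ∀ y z : EuclideanSpace ℝ (Fin n), y ∈ closedBall xbar ε →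
        z ∈ closedBall xbar ε → (∀ u, ‖Matrix.toEuclideanLin (F y) u
          - Matrix.toEuclideanLin (F z) u‖ ≤ L * ‖x - xbar‖ * ‖u‖) →
        f y ≤ f z + L * ‖x - xbar‖ := by
      intro y z hy hz hyz
      obtain ⟨u, hu⟩ := exists_unit_eig F f hf y
      rw [unit_eig_mem] at hu
      obtain ⟨hun, hueig⟩ := hu
      have h1 : (inner ℝ (Matrix.toEuclideanLin (F y) u) u : ℝ) = f y := by
        rw [hueig, real_inner_smul_left, real_inner_self_eq_norm_sq, hun]
        ring
      have h2 : (inner ℝ (Matrix.toEuclideanLin (F z) u) u : ℝ) ≤ f z := by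
        have := hray z u
        rwa [hun, one_pow, mul_one] at this
      have h3 : (inner ℝ (Matrix.toEuclideanLin (F y) u) u : ℝ)
          ≤ inner ℝ (Matrix.toEuclideanLin (F z) u) u + L * ‖x - xbar‖ := by
        have hsub : (inner ℝ (Matrix.toEuclideanLin (F y) u) u : ℝ)
            - inner ℝ (Matrix.toEuclideanLin (F z) u) u
            = inner ℝ (Matrix.toEuclideanLin (F y) u - Matrix.toEuclideanLin (F z) u) u := by
          rw [inner_sub_left]
        have habs : (inner ℝ (Matrix.toEuclideanLin (F y) u
            - Matrix.toEuclideanLin (F z) u) u : ℝ) ≤ L * ‖x - xbar‖ := by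
          calc (inner ℝ (Matrix.toEuclideanLin (F y) u
              - Matrix.toEuclideanLin (F z) u) u : ℝ)
              ≤ ‖Matrix.toEuclideanLin (F y) u - Matrix.toEuclideanLin (F z) u‖ * ‖u‖ :=
                real_inner_le_norm _ _
            _ ≤ (L * ‖x - xbar‖ * ‖u‖) * ‖u‖ :=
                mul_le_mul_of_nonneg_right (hyz u) (norm_nonneg _)
            _ = L * ‖x - xbar‖ := by rw [hun]; ring
        linarith [hsub ▸ habs]
      linarith
    have hxball : x ∈ closedBall xbar ε := hx
    have hxbarball : xbar ∈ closedBall xbar ε := by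
      apply mem_closedBall_self
      linarith
    have hfw : ∀ u : EuclideanSpace ℝ (Fin p), ‖Matrix.toEuclideanLin (F x) u
        - Matrix.toEuclideanLin (F xbar) u‖ ≤ L * ‖x - xbar‖ * ‖u‖ := fun u => hFlip x hx u
    have hbw : ∀ u : EuclideanSpace ℝ (Fin p), ‖Matrix.toEuclideanLin (F xbar) u
        - Matrix.toEuclideanLin (F x) u‖ ≤ L * ‖x - xbar‖ * ‖u‖ := by
      intro u
      rw [norm_sub_rev]
      exact hfw u
    have h1 := key x xbar hxball hxbarball hfw
    have h2 := key xbar x hxbarball hxball hbw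
    rw [abs_le]
    constructor <;> linarith
  -- spectral gap at xbar
  obtain ⟨γ, hγ0, hγ⟩ := gap_bound (Matrix.toEuclideanLin (F xbar)) (hTsym xbar) (f xbar)
  -- a reference unit eigenvector at xbar
  obtain ⟨vbar, hvbar⟩ := exists_unit_eig F f hf xbar
  have hne : (unitEigenvectors F f xbar).Nonempty := ⟨vbar, hvbar⟩
  refine ⟨8 * L / γ, by positivity, 1, one_pos, ?_⟩
  intro x hxε v hv
  rw [Real.rpow_one]
  set d : ℝ := ‖x - xbar‖ with hd
  have hd0 : 0 ≤ d := norm_nonneg _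
  have hxball : x ∈ closedBall xbar ε := by
    rw [mem_closedBall, dist_eq_norm]
    exact hxε
  rw [unit_eig_mem] at hv
  obtain ⟨hvn, hveig⟩ := hv
  set V := Module.End.eigenspace (Matrix.toEuclideanLin (F xbar)) (f xbar) with hV
  -- key residual bound
  have hres : ‖Matrix.toEuclideanLin (F xbar) v - f xbar • v‖ ≤ 2 * L * d := by
    have hsplit : Matrix.toEuclideanLin (F xbar) v - f xbar • v
        = (Matrix.toEuclideanLin (F xbar) v - Matrix.toEuclideanLin (F x) v)
          + (f x - f xbar) • v := by
      rw [hveig, sub_smul]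
      abel
    rw [hsplit]
    calc ‖(Matrix.toEuclideanLin (F xbar) v - Matrix.toEuclideanLin (F x) v)
          + (f x - f xbar) • v‖
        ≤ ‖Matrix.toEuclideanLin (F xbar) v - Matrix.toEuclideanLin (F x) v‖
          + ‖(f x - f xbar) • v‖ := norm_add_le _ _
      _ ≤ L * d * ‖v‖ + |f x - f xbar| * ‖v‖ := by
          apply add_le_add
          · rw [norm_sub_rev]
            exact hFlip x hxball v
          · rw [norm_smul, Real.norm_eq_abs]
      _ ≤ L * d * 1 + (L * d) * 1 := by
          rw [hvn]
          exact add_le_add (le_refl _) (mul_le_mul_of_nonneg_right (hflip x hxball) zero_le_one)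
      _ = 2 * L * d := by ring
  -- orthogonal decomposition of v
  set u : EuclideanSpace ℝ (Fin p) := (V.orthogonalProjectionOnto v : EuclideanSpace ℝ (Fin p))
    with hu
  set w : EuclideanSpace ℝ (Fin p) := v - u with hw
  have hwmem : w ∈ Vᗮ := V.sub_starProjection_mem_orthogonal v
  have humem : u ∈ V := SetLike.coe_mem _
  have huv : Matrix.toEuclideanLin (F xbar) u = f xbar • u :=
    Module.End.mem_eigenspace_iff.mp humem
  have hwres : Matrix.toEuclideanLin (F xbar) w - f xbar • w
      = Matrix.toEuclideanLin (F xbar) v - f xbar • v := by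
    rw [hw, map_sub, huv, smul_sub]
    abel
  have hwbound : γ * ‖w‖ ≤ 2 * L * d := by
    calc γ * ‖w‖ ≤ ‖Matrix.toEuclideanLin (F xbar) w - f xbar • w‖ := hγ w hwmem
      _ = ‖Matrix.toEuclideanLin (F xbar) v - f xbar • v‖ := by rw [hwres]
      _ ≤ 2 * L * d := hres
  have hwnorm : ‖w‖ ≤ 2 * L * d / γ := by
    rw [le_div_iff₀ hγ0]
    linarith [hwbound]
  -- Pythagoras
  have hperp : (inner ℝ u w : ℝ) = 0 := (Submodule.mem_orthogonal V w).mp hwmem u humem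
  have hpyth : ‖u‖ ^ 2 + ‖w‖ ^ 2 = 1 := by
    have hv' : v = u + w := by rw [hw]; abel
    have := norm_add_sq_real u w
    rw [← hv', hvn, hperp] at this
    nlinarith [this]
  have hu1 : ‖u‖ ≤ 1 := by nlinarith [sq_nonneg (‖w‖), norm_nonneg u, hpyth]
  -- case split on d
  rcases le_or_gt (γ / (4 * L)) d with hcase | hcase
  · -- large d : trivial bound by 2
    have h2 : Metric.infDist v (unitEigenvectors F f xbar) ≤ 2 := by
      calc Metric.infDist v (unitEigenvectors F f xbar) ≤ dist v vbar :=
          Metric.infDist_le_dist_of_mem hvbar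
        _ ≤ ‖v‖ + ‖vbar‖ := by
            rw [dist_eq_norm]
            exact norm_sub_le _ _
        _ = 2 := by
            rw [hvn, ((unit_eig_mem F f xbar vbar).mp hvbar).1]
            norm_num
    have h5 : 8 * L / γ * (γ / (4 * L)) = 2 := by
      field_simp
      ring
    have h6 : 8 * L / γ * (γ / (4 * L)) ≤ 8 * L / γ * d :=
      mul_le_mul_of_nonneg_left hcase (by positivity)
    linarith
  · -- small d : projection argument
    have hwhalf : ‖w‖ ≤ 1 / 2 := by
      have : 2 * L * d / γ ≤ 1 / 2 := by
        rw [div_le_div_iff₀ hγ0 (by norm_num : (0:ℝ) < 2)]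
        calc 2 * L * d * 2 = 4 * L * d := by ring
          _ ≤ 4 * L * (γ / (4 * L)) := mul_le_mul_of_nonneg_left hcase.le (by positivity)
          _ = γ := by field_simp
          _ = 1 * γ := by ring
      linarith [hwnorm]
    have hul : 1 / 2 ≤ ‖u‖ := by nlinarith [hpyth, norm_nonneg u, norm_nonneg w]
    have hu0 : u ≠ 0 := by
      intro h
      rw [h, norm_zero] at hul
      linarith
    set z : EuclideanSpace ℝ (Fin p) := ‖u‖⁻¹ • u with hz
    have hzmem : z ∈ unitEigenvectors F f xbar := by
      rw [unit_eig_mem]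
      constructor
      · rw [hz, norm_smul, norm_inv, norm_norm, inv_mul_cancel₀ (norm_ne_zero_iff.mpr hu0)]
      · rw [hz, map_smul, huv, smul_comm]
    have hdist : dist v z ≤ 2 * ‖w‖ := by
      have h1 : v - z = w + (1 - ‖u‖⁻¹) • u := by
        rw [hz, hw, sub_smul, one_smul]
        abel
      have hupos : (0:ℝ) < ‖u‖ := lt_of_lt_of_le (by norm_num) hul
      have h2 : ‖(1 - ‖u‖⁻¹) • u‖ = 1 - ‖u‖ := by
        rw [norm_smul, Real.norm_eq_abs]
        rw [abs_of_nonpos (by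
          rw [sub_nonpos]
          exact (one_le_inv₀ hupos).mpr hu1), neg_sub]
        field_simp
      have h3 : 1 - ‖u‖ ≤ ‖w‖ := by nlinarith [hpyth, hu1, norm_nonneg w, hwhalf]
      rw [dist_eq_norm, h1]
      calc ‖w + (1 - ‖u‖⁻¹) • u‖ ≤ ‖w‖ + ‖(1 - ‖u‖⁻¹) • u‖ := norm_add_le _ _
        _ = ‖w‖ + (1 - ‖u‖) := by rw [h2]
        _ ≤ 2 * ‖w‖ := by linarith
    have hfinal : Metric.infDist v (unitEigenvectors F f xbar) ≤ 2 * ‖w‖ :=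
      le_trans (Metric.infDist_le_dist_of_mem hzmem) hdist
    calc Metric.infDist v (unitEigenvectors F f xbar) ≤ 2 * ‖w‖ := hfinal
      _ ≤ 2 * (2 * L * d / γ) := by linarith [hwnorm]
      _ = 4 * L * d / γ := by ring
      _ ≤ 8 * L * d / γ := by
          gcongr
          nlinarith [hL0, hd0]
      _ = 8 * L / γ * d := by ring
end

section
/- Suppose f : ℝⁿ → ℝ is continuous, S_F := {x : f(x) ≤ 0} is nonempty, and there exist c > 0, R > 0 such that the limiting-subdifferential slope satisfies 𝔪_f(x) ≥ c for all x with f(x) > 0 and ‖x‖ ≥ R. Fix s ∈ S_F. Then (c/2)·dist(x, S_F) ≤ [f(x)]₊ for all x with ‖x‖ ≥ 3R + 2‖s‖. -/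
/-!
Suppose `f x < (c / 2) d` with `d = dist(x, S_F)` and `f x > 0`, and put `σ = 2 f x / d < c`.
In finite dimensions Ekeland's principle for `[f]₊` is just minimisation of `[f]₊ + σ‖· - x‖`:
it yields `y` with `σ‖y - x‖ ≤ f x`, so `‖y - x‖ ≤ d / 2`. Hence `f y > 0`, `‖y‖ ≥ R`, and `y` is a
local minimiser of `f + σ‖· - y‖`. Minimising `f + K √(‖· - y‖² + δ²)` with `K > σ` and `δ → 0`
gives Fréchet subgradients of norm `≤ K` at points tending to `y`; a limit of them is a limiting
subgradient, so `𝔪_f(y) ≤ σ < c`, a contradiction.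
-/

open Metric Set Filter Topology
open scoped ENNReal NNReal

/-- The Fréchet subdifferential of `f` at `x`:
`v ∈ ∂̂f(x)` iff `liminf_{h → 0} (f(x+h) − f(x) − ⟨v, h⟩)/‖h‖ ≥ 0`. -/
def frechetSubdiff {n : ℕ} (f : EuclideanSpace ℝ (Fin n) → ℝ)
    (x : EuclideanSpace ℝ (Fin n)) : Set (EuclideanSpace ℝ (Fin n)) :=
  {v | ∀ ε > (0 : ℝ), ∀ᶠ h in 𝓝 (0 : EuclideanSpace ℝ (Fin n)),
      f (x + h) - f x - (inner ℝ v h : ℝ) ≥ -ε * ‖h‖}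

/-- The limiting (Mordukhovich) subdifferential of `f` at `x`. -/
def limitingSubdiff {n : ℕ} (f : EuclideanSpace ℝ (Fin n) → ℝ)
    (x : EuclideanSpace ℝ (Fin n)) : Set (EuclideanSpace ℝ (Fin n)) :=
  {v | ∃ xs vs : ℕ → EuclideanSpace ℝ (Fin n),
      (∀ k, vs k ∈ frechetSubdiff f (xs k)) ∧
      Tendsto xs atTop (𝓝 x) ∧
      Tendsto (fun k => f (xs k)) atTop (𝓝 (f x)) ∧
      Tendsto vs atTop (𝓝 v)}

/-- The nonsmooth slope `𝔪_f(x) := inf{‖w‖ : w ∈ ∂f(x)}`, with value `+∞` when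
`∂f(x) = ∅`. -/
noncomputable def nonsmoothSlope {n : ℕ} (f : EuclideanSpace ℝ (Fin n) → ℝ)
    (x : EuclideanSpace ℝ (Fin n)) : ℝ≥0∞ :=
  ⨅ v ∈ limitingSubdiff f x, (‖v‖₊ : ℝ≥0∞)

theorem LowerSemicontinuous.exists_ekeland_point {E : Type*} [NormedAddCommGroup E]
    [ProperSpace E] {g : E → ℝ} (hg : LowerSemicontinuous g)
    {m : ℝ} (hm : ∀ z, m ≤ g z) {σ : ℝ} (hσ : 0 < σ) (x : E) :
    ∃ y, g y + σ * ‖y - x‖ ≤ g x ∧ ∀ z, g y ≤ g z + σ * ‖z - y‖ := by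
  set ρ := (g x - m) / σ
  have hρ : 0 ≤ ρ := div_nonneg (sub_nonneg.2 (hm x)) hσ.le
  have hG : LowerSemicontinuous fun z => g z + σ * ‖z - x‖ :=
    hg.add (continuous_const.mul (continuous_id.sub continuous_const).norm).lowerSemicontinuous
  obtain ⟨y, -, hy⟩ := (hG.lowerSemicontinuousOn _).exists_isMinOn (nonempty_closedBall.2 hρ)
    (isCompact_closedBall x ρ)
  have hyx : g y + σ * ‖y - x‖ ≤ g x := by
    simpa using hy (mem_closedBall_self hρ)
  -- Outside the ball of radius `ρ` the penalty alone already exceeds `g x - m`.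
  have hymin : ∀ z, g y + σ * ‖y - x‖ ≤ g z + σ * ‖z - x‖ := by
    intro z
    by_cases hz : z ∈ closedBall x ρ
    · exact hy hz
    · rw [mem_closedBall, dist_eq_norm, not_le, div_lt_iff₀ hσ] at hz
      linarith [hm z]
  refine ⟨y, hyx, fun z => ?_⟩
  have := mul_le_mul_of_nonneg_left (norm_sub_le_norm_sub_add_norm_sub z y x) hσ.le
  linarith [hymin z]

theorem isLocalMin_add_norm_sub_of_max_zero_le {E : Type*} [NormedAddCommGroup E] {f : E → ℝ}
    {y : E} {σ : ℝ} (hf : ContinuousAt f y) (hfy : 0 < f y)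
    (hmin : ∀ z, max (f y) 0 ≤ max (f z) 0 + σ * ‖z - y‖) :
    IsLocalMin (fun z => f z + σ * ‖z - y‖) y := by
  filter_upwards [hf.eventually (lt_mem_nhds hfy)] with z hz
  simpa [max_eq_left hz.le, max_eq_left hfy.le] using hmin z

theorem HasGradientAt.const_mul {F : Type*} [NormedAddCommGroup F] [InnerProductSpace ℝ F]
    [CompleteSpace F] {φ : F → ℝ} {g p : F} (hφ : HasGradientAt φ g p) (K : ℝ) :
    HasGradientAt (fun z => K * φ z) (K • g) p := by
  rw [hasGradientAt_iff_hasFDerivAt, map_smul]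
  exact (hasGradientAt_iff_hasFDerivAt.1 hφ).const_mul K

theorem hasGradientAt_sqrt_norm_sub_sq_add_sq {F : Type*} [NormedAddCommGroup F]
    [InnerProductSpace ℝ F] [CompleteSpace F] (y p : F) {δ : ℝ} (hδ : δ ≠ 0) :
    HasGradientAt (fun z => √(‖z - y‖ ^ 2 + δ ^ 2))
      ((√(‖p - y‖ ^ 2 + δ ^ 2))⁻¹ • (p - y)) p := by
  have hpos : ‖p - y‖ ^ 2 + δ ^ 2 ≠ 0 := by positivity
  have := ((hasFDerivAt_sub_const (x := p) y).norm_sq.add_const (δ ^ 2)).sqrt hpos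
  rw [hasGradientAt_iff_hasFDerivAt]
  refine this.congr_fderiv ?_
  ext h
  simp only [one_div, mul_inv_rev, map_sub, ContinuousLinearMap.comp_id, smul_apply, sub_apply,
    coe_innerSL_apply, nsmul_eq_mul, Nat.cast_ofNat, smul_eq_mul, map_smul,
    InnerProductSpace.toDual_apply_apply]
  field_simp

section Subdifferential

variable {n : ℕ} {f : EuclideanSpace ℝ (Fin n) → ℝ}

theorem neg_mem_frechetSubdiff_of_isLocalMin_add {φ : EuclideanSpace ℝ (Fin n) → ℝ}
    {g p : EuclideanSpace ℝ (Fin n)} (hφ : HasGradientAt φ g p)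
    (hmin : IsLocalMin (fun z => f z + φ z) p) : -g ∈ frechetSubdiff f p := by
  intro ε hε
  have hlin := (hasGradientAt_iff_isLittleO_nhds_zero.1 hφ).bound hε
  have hshift : Tendsto (p + ·) (𝓝 0) (𝓝 p) :=
    (continuous_const_add p).tendsto' 0 p (add_zero p)
  filter_upwards [hlin, hshift.eventually hmin] with h hlin hmin
  rw [Real.norm_eq_abs, abs_le] at hlin
  rw [inner_neg_left]
  linarith [hlin.2]

theorem exists_frechetSubdiff_near_of_isLocalMin (hf : Continuous f)
    {y : EuclideanSpace ℝ (Fin n)} {κ K : ℝ} (hK : 0 < K) (hκK : κ < K)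
    (hmin : IsLocalMin (fun z => f z + κ * ‖z - y‖) y) {ε : ℝ} (hε : 0 < ε) :
    ∃ p ∈ closedBall y ε, ∃ v ∈ frechetSubdiff f p, ‖v‖ ≤ K := by
  obtain ⟨r, hr, hball⟩ := nhds_basis_closedBall.mem_iff.1 hmin
  set ρ := min r ε
  have hρ : 0 < ρ := lt_min hr hε
  set δ := (K - κ) * ρ / (2 * K)
  have hδ : 0 < δ := div_pos (mul_pos (sub_pos.2 hκK) hρ) (by positivity)
  set ψ := fun z => √(‖z - y‖ ^ 2 + δ ^ 2)
  have hψ : Continuous ψ := by fun_prop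
  obtain ⟨p, hp, hpmin⟩ := (isCompact_closedBall y ρ).exists_isMinOn
    (nonempty_closedBall.2 hρ.le) (hf.add (continuous_const.mul hψ)).continuousOn
  -- Comparing with `z = y` and with the local minimality of `y` traps `p` near `y`.
  have hψp : ‖p - y‖ ≤ ψ p := Real.le_sqrt_of_sq_le (le_add_of_nonneg_right (sq_nonneg δ))
  have hpy : ‖p - y‖ ≤ ρ / 2 := by
    have hcmp : f p + K * ψ p ≤ f y + K * δ := by
      simpa [ψ, Real.sqrt_sq hδ.le] using hpmin (mem_closedBall_self hρ.le)
    have hloc : f y ≤ f p + κ * ‖p - y‖ := by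
      simpa using hball (closedBall_subset_closedBall (min_le_left _ _) hp)
    have : (K - κ) * ‖p - y‖ ≤ (K - κ) * (ρ / 2) := by
      have : K * δ = (K - κ) * (ρ / 2) := by simp only [δ]; field_simp
      linarith [mul_le_mul_of_nonneg_left hψp hK.le]
    exact le_of_mul_le_mul_left this (sub_pos.2 hκK)
  have hlocal : IsLocalMin (fun z => f z + K * ψ z) p :=
    hpmin.isLocalMin (closedBall_mem_nhds_of_mem (by rw [mem_ball, dist_eq_norm]; linarith))
  have hgrad := (hasGradientAt_sqrt_norm_sub_sq_add_sq y p hδ.ne').const_mul K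
  refine ⟨p, closedBall_subset_closedBall (min_le_right _ _) hp, _,
    neg_mem_frechetSubdiff_of_isLocalMin_add hgrad hlocal, ?_⟩
  rw [norm_neg, norm_smul, norm_smul, norm_inv, Real.norm_of_nonneg hK.le,
    Real.norm_of_nonneg (Real.sqrt_nonneg _), ← div_eq_inv_mul]
  exact mul_le_of_le_one_right hK.le (div_le_one_of_le₀ hψp (Real.sqrt_nonneg _))

theorem exists_mem_limitingSubdiff_of_frechetSubdiff_near {x : EuclideanSpace ℝ (Fin n)}
    (hf : ContinuousAt f x) {K : ℝ}
    (hnear : ∀ ε > 0, ∃ p ∈ closedBall x ε, ∃ v ∈ frechetSubdiff f p, ‖v‖ ≤ K) :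
    ∃ v ∈ limitingSubdiff f x, ‖v‖ ≤ K := by
  choose p hpx v hv hvK using fun k : ℕ => hnear (1 / (k + 1)) Nat.one_div_pos_of_nat
  have hp : Tendsto p atTop (𝓝 x) :=
    tendsto_iff_dist_tendsto_zero.2 (squeeze_zero (fun _ => dist_nonneg) hpx
      tendsto_one_div_add_atTop_nhds_zero_nat)
  obtain ⟨w, hwK, φ, hφ, hvw⟩ := (isCompact_closedBall 0 K).tendsto_subseq (x := v)
    fun k => mem_closedBall_zero_iff.2 (hvK k)
  have hpφ := hp.comp hφ.tendsto_atTop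
  exact ⟨w, ⟨p ∘ φ, v ∘ φ, fun k => hv (φ k), hpφ, hf.tendsto.comp hpφ, hvw⟩,
    mem_closedBall_zero_iff.1 hwK⟩

theorem nonsmoothSlope_le_of_mem_limitingSubdiff {x v : EuclideanSpace ℝ (Fin n)}
    (hv : v ∈ limitingSubdiff f x) : nonsmoothSlope f x ≤ ENNReal.ofReal ‖v‖ := by
  rw [← coe_nnnorm, ENNReal.ofReal_coe_nnreal]
  exact iInf₂_le v hv

theorem nonsmoothSlope_le_of_isLocalMin (hf : Continuous f) {y : EuclideanSpace ℝ (Fin n)}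
    {σ : ℝ} (hσ : 0 ≤ σ) (hmin : IsLocalMin (fun z => f z + σ * ‖z - y‖) y) :
    nonsmoothSlope f y ≤ ENNReal.ofReal σ := by
  refine ENNReal.le_of_forall_pos_le_add fun ε hε _ => ?_
  obtain ⟨v, hv, hvK⟩ := exists_mem_limitingSubdiff_of_frechetSubdiff_near hf.continuousAt
    fun r hr => exists_frechetSubdiff_near_of_isLocalMin hf (K := σ + ε) (by positivity)
      (by simpa using hε) hmin hr
  calc nonsmoothSlope f y ≤ ENNReal.ofReal ‖v‖ := nonsmoothSlope_le_of_mem_limitingSubdiff hv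
    _ ≤ ENNReal.ofReal (σ + ε) := ENNReal.ofReal_le_ofReal hvK
    _ = ENNReal.ofReal σ + ε := by
      rw [ENNReal.ofReal_add hσ ε.coe_nonneg, ENNReal.ofReal_coe_nnreal]

end Subdifferential

theorem global_error_bound_from_slope_general {n : ℕ}
    (f : EuclideanSpace ℝ (Fin n) → ℝ)
    (hcont : Continuous f)
    (c R : ℝ)
    (hslope : ∀ x : EuclideanSpace ℝ (Fin n), 0 < f x → R ≤ ‖x‖ →
      ENNReal.ofReal c ≤ nonsmoothSlope f x)
    (s : EuclideanSpace ℝ (Fin n)) (hs : f s ≤ 0) :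
    ∀ x : EuclideanSpace ℝ (Fin n), 3 * R + 2 * ‖s‖ ≤ ‖x‖ →
      c / 2 * Metric.infDist x {y : EuclideanSpace ℝ (Fin n) | f y ≤ 0} ≤ max (f x) 0 := by
  intro x hx
  set S := {y : EuclideanSpace ℝ (Fin n) | f y ≤ 0}
  rcases le_or_gt (f x) 0 with hfx | hfx
  · simp [infDist_zero_of_mem (show x ∈ S from hfx)]
  by_contra! hlt
  rw [max_eq_left hfx.le] at hlt
  set d := infDist x S
  have hd : 0 < d := infDist_nonneg.lt_of_ne' fun h : d = 0 => by rw [h, mul_zero] at hlt; linarith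
  set σ := 2 * f x / d
  have hσ : 0 < σ := by positivity
  have hσc : σ < c := by rw [div_lt_iff₀ hd]; linarith
  obtain ⟨y, hdescent, hymin⟩ :=
    (hcont.max continuous_const).lowerSemicontinuous.exists_ekeland_point
      (fun z => le_max_right (f z) 0) hσ x
  have hyx : ‖y - x‖ ≤ d / 2 := by
    have : f x / σ = d / 2 := by simp only [σ]; field_simp
    rw [← this, le_div_iff₀ hσ]
    linarith [le_max_right (f y) 0, max_eq_left hfx.le]
  have hfy : 0 < f y := by
    by_contra! hfy
    linarith [dist_eq_norm' x y ▸ infDist_le_dist_of_mem (show y ∈ S from hfy) (x := x)]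
  have hyR : R ≤ ‖y‖ := by
    have hdx : d ≤ ‖x‖ + ‖s‖ := (infDist_le_dist_of_mem (show s ∈ S from hs)).trans
      (dist_eq_norm x s ▸ norm_sub_le x s)
    linarith [norm_sub_norm_le x y, norm_sub_rev y x, norm_nonneg y]
  have hcσ := (hslope y hfy hyR).trans (nonsmoothSlope_le_of_isLocalMin hcont hσ.le
    (isLocalMin_add_norm_sub_of_max_zero_le hcont.continuousAt hfy hymin))
  rw [ENNReal.ofReal_le_ofReal_iff hσ.le] at hcσ
  linarith

/-- if the slope of `f` is bounded below by `c > 0` outside the ball of radius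
`R` on the set `{f > 0}`, then `(c/2)·dist(x, S_F) ≤ [f(x)]₊` for `‖x‖ ≥ 3R + 2‖s‖`, where
`s ∈ S_F := {f ≤ 0}`. -/
theorem global_error_bound_from_slope {n : ℕ}
    (f : EuclideanSpace ℝ (Fin n) → ℝ)
    (hcont : Continuous f) (hLip : LocallyLipschitz f)
    (c R : ℝ) (hc : 0 < c) (hR : 0 < R)
    (hslope : ∀ x : EuclideanSpace ℝ (Fin n), 0 < f x → R ≤ ‖x‖ →
      ENNReal.ofReal c ≤ nonsmoothSlope f x)
    (s : EuclideanSpace ℝ (Fin n)) (hs : f s ≤ 0) :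
    ∀ x : EuclideanSpace ℝ (Fin n), 3 * R + 2 * ‖s‖ ≤ ‖x‖ →
      c / 2 * Metric.infDist x {y : EuclideanSpace ℝ (Fin n) | f y ≤ 0} ≤ max (f x) 0 :=
  global_error_bound_from_slope_general f hcont c R hslope s hs
end

section
/- Let f be the largest eigenvalue function of a symmetric polynomial matrix F : ℝⁿ → S^p, and suppose γ : (0, ε) → ℝⁿ, λ_l : (0, ε) → ℝ, v^l : (0, ε) → ℝ^p (l = 1,…,r) are differentiable curves with λ_l(t) ≥ 0, Σ_l λ_l(t) = 1, ‖v^l(t)‖ = 1, and F(γ(t))v^l(t) = f(γ(t))v^l(t) for all t. Then d/dt [f(γ(t))] = ⟨u(t), γ'(t)⟩, where u(t) := Σ_{l=1}^r λ_l(t) Σ_{i,j=1}^p v_i^l(t) v_j^l(t) ∇f_{ij}(γ(t)). -/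
/-!
On the interval, `f (γ s) = ∑ₗ λₗ(s) ⟨F(γ s) vˡ(s), vˡ(s)⟩`: each quadratic form equals the
eigenvalue because `‖vˡ‖ = 1`, and the weights sum to `1`. Differentiating at `t`, the terms with
`λₗ'` add up to `f (γ t) ∑ₗ λₗ' = 0`, and the terms with `vˡ'` add up to
`2 f (γ t) ⟨vˡ, vˡ'⟩ = 0` by the symmetry of `F` and the eigenvector equation, since a curve of
unit vectors is orthogonal to its velocity. Only the derivative of `F ∘ γ` survives.
-/

open Metric Set Filter Topology

open Matrix RealInnerProductSpace

theorem HasDerivAt.eq_zero_of_eventually_const {𝕜 F : Type*} [NontriviallyNormedField 𝕜]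
    [NormedAddCommGroup F] [NormedSpace 𝕜 F] {f : 𝕜 → F} {f' c : F} {t : 𝕜}
    (hf : HasDerivAt f f' t) (hc : ∀ᶠ s in 𝓝 t, f s = c) : f' = 0 :=
  hf.unique ((hasDerivAt_const t c).congr_of_eventuallyEq hc)

theorem HasDerivAt.inner_eq_zero_of_eventually_norm_const {E : Type*} [NormedAddCommGroup E]
    [InnerProductSpace ℝ E] {v : ℝ → E} {v' : E} {t c : ℝ} (hv : HasDerivAt v v' t)
    (hc : ∀ᶠ s in 𝓝 t, ‖v s‖ = c) : ⟪v t, v'⟫ = 0 := by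
  have h := hv.norm_sq.eq_zero_of_eventually_const (c := c ^ 2) (hc.mono fun s hs => by rw [hs])
  simpa using h

theorem hasDerivAt_sum_mul_of_sum_eq_one {ι : Type*} [Fintype ι] {a q : ι → ℝ → ℝ}
    {a' q' : ι → ℝ} {c t : ℝ} (ha : ∀ l, HasDerivAt (a l) (a' l) t)
    (hq : ∀ l, HasDerivAt (q l) (q' l) t) (hsum : ∀ᶠ s in 𝓝 t, ∑ l, a l s = 1)
    (hqt : ∀ l, q l t = c) :
    HasDerivAt (fun s => ∑ l, a l s * q l s) (∑ l, a l t * q' l) t := by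
  have ha' : ∑ l, a' l = 0 := (HasDerivAt.fun_sum fun l _ => ha l).eq_zero_of_eventually_const hsum
  refine (HasDerivAt.fun_sum (u := Finset.univ) fun l _ => (ha l).mul (hq l)).congr_deriv ?_
  simp [hqt, Finset.sum_add_distrib, ← Finset.sum_mul, ha']

theorem dotProduct_mulVec_self_of_mulVec_eq_smul {ι : Type*} [Fintype ι] {w : ι → ℝ} {μ : ℝ}
    {B : Matrix ι ι ℝ} (heig : B *ᵥ w = μ • w) (hw : w ⬝ᵥ w = 1) : w ⬝ᵥ B *ᵥ w = μ := by
  rw [heig, dotProduct_smul, hw, smul_eq_mul, mul_one]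

section QuadraticForm

variable {ι : Type*} [Fintype ι] {A : ℝ → Matrix ι ι ℝ} {A' : Matrix ι ι ℝ} {t : ℝ}

theorem HasDerivAt.dotProduct_mulVec {u w : ℝ → ι → ℝ} {u' w' : ι → ℝ}
    (hu : HasDerivAt u u' t) (hA : ∀ i j, HasDerivAt (fun s => A s i j) (A' i j) t)
    (hw : HasDerivAt w w' t) :
    HasDerivAt (fun s => u s ⬝ᵥ A s *ᵥ w s)
      (u' ⬝ᵥ A t *ᵥ w t + u t ⬝ᵥ A' *ᵥ w t + u t ⬝ᵥ A t *ᵥ w') t := by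
  rw [hasDerivAt_pi] at hu hw
  refine (HasDerivAt.fun_sum (u := Finset.univ) fun i _ => (hu i).mul
    (HasDerivAt.fun_sum (u := Finset.univ) fun j _ => (hA i j).mul (hw j))).congr_deriv ?_
  simp only [dotProduct, mulVec, ← Finset.sum_add_distrib, Finset.mul_sum]
  exact Finset.sum_congr rfl fun i _ => Finset.sum_congr rfl fun j _ => by
    simp only [Pi.mul_apply]; ring

theorem HasDerivAt.dotProduct_mulVec_self_of_eigenvector {w : ℝ → ι → ℝ} {w' : ι → ℝ} {μ : ℝ}
    (hA : ∀ i j, HasDerivAt (fun s => A s i j) (A' i j) t) (hw : HasDerivAt w w' t)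
    (hsymm : (A t).IsSymm) (heig : A t *ᵥ w t = μ • w t) (horth : w t ⬝ᵥ w' = 0) :
    HasDerivAt (fun s => w s ⬝ᵥ A s *ᵥ w s) (w t ⬝ᵥ A' *ᵥ w t) t := by
  have hleft : w' ⬝ᵥ A t *ᵥ w t = 0 := by
    rw [heig, dotProduct_smul, dotProduct_comm, horth, smul_zero]
  have hright : w t ⬝ᵥ A t *ᵥ w' = 0 := by
    rw [Matrix.dotProduct_mulVec, ← hsymm.eq, vecMul_transpose, heig, smul_dotProduct, horth,
      smul_zero]
  simpa [hleft, hright] using hw.dotProduct_mulVec hA hw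

end QuadraticForm

theorem HasGradientAt.comp_hasDerivAt {E : Type*} [NormedAddCommGroup E] [InnerProductSpace ℝ E]
    [CompleteSpace E] {g : E → ℝ} {g' : E} {γ : ℝ → E} {γ' : E} {t : ℝ}
    (hg : HasGradientAt g g' (γ t)) (hγ : HasDerivAt γ γ' t) :
    HasDerivAt (fun s => g (γ s)) ⟪g', γ'⟫ t := by
  simpa [Function.comp_def] using hg.hasFDerivAt.comp_hasDerivAt t hγ

theorem EuclideanSpace.dotProduct_self_ofLp_of_norm_eq_one {ι : Type*} [Fintype ι]
    {x : EuclideanSpace ℝ ι} (hx : ‖x‖ = 1) : x.ofLp ⬝ᵥ x.ofLp = 1 := by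
  have h := real_inner_self_eq_norm_sq x
  rwa [EuclideanSpace.inner_eq_star_dotProduct, hx, one_pow, star_trivial] at h

theorem sum_weighted_gradient_mul_eq_sum_dotProduct_mulVec {κ ι m : Type*} [Fintype κ]
    [Fintype ι] [Fintype m] (c : κ → ℝ) (w : κ → ι → ℝ) (D : ι → ι → EuclideanSpace ℝ m)
    (g : EuclideanSpace ℝ m) :
    ∑ k, (∑ l, c l * ∑ i, ∑ j, w l i * w l j * D i j k) * g k =
      ∑ l, c l * (w l ⬝ᵥ (fun i j => ⟪D i j, g⟫) *ᵥ w l) := by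
  simp only [dotProduct, mulVec, PiLp.inner_apply, RCLike.inner_apply, conj_trivial,
    Finset.mul_sum, Finset.sum_mul]
  rw [Finset.sum_comm]
  refine Finset.sum_congr rfl fun l _ => ?_
  rw [Finset.sum_comm]
  refine Finset.sum_congr rfl fun i _ => ?_
  rw [Finset.sum_comm]
  exact Finset.sum_congr rfl fun j _ => Finset.sum_congr rfl fun k _ => by ring

theorem deriv_largest_eigenvalue_along_curve_general {n p r : ℕ}
    (F : EuclideanSpace ℝ (Fin n) → Matrix (Fin p) (Fin p) ℝ)
    (hsym : ∀ x i j, F x i j = F x j i)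
    (f : EuclideanSpace ℝ (Fin n) → ℝ)
    (Df : Fin p → Fin p → EuclideanSpace ℝ (Fin n) → EuclideanSpace ℝ (Fin n))
    (hDf : ∀ i j x, HasGradientAt (fun y => F y i j) (Df i j x) x)
    (ε : ℝ)
    (γ : ℝ → EuclideanSpace ℝ (Fin n)) (γ' : ℝ → EuclideanSpace ℝ (Fin n))
    (lam : Fin r → ℝ → ℝ) (lam' : Fin r → ℝ → ℝ)
    (v : Fin r → ℝ → EuclideanSpace ℝ (Fin p))
    (v' : Fin r → ℝ → EuclideanSpace ℝ (Fin p))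
    (hγ : ∀ t ∈ Set.Ioo (0 : ℝ) ε, HasDerivAt γ (γ' t) t)
    (hlamd : ∀ l, ∀ t ∈ Set.Ioo (0 : ℝ) ε, HasDerivAt (lam l) (lam' l t) t)
    (hvd : ∀ l, ∀ t ∈ Set.Ioo (0 : ℝ) ε, HasDerivAt (v l) (v' l t) t)
    (hlamsum : ∀ t ∈ Set.Ioo (0 : ℝ) ε, ∑ l, lam l t = 1)
    (hvnorm : ∀ l, ∀ t ∈ Set.Ioo (0 : ℝ) ε, ‖v l t‖ = 1)
    (heig : ∀ l, ∀ t ∈ Set.Ioo (0 : ℝ) ε, ∀ i,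
      ∑ j, F (γ t) i j * v l t j = f (γ t) * v l t i) :
    ∀ t ∈ Set.Ioo (0 : ℝ) ε,
      HasDerivAt (fun s => f (γ s))
        (∑ k, (∑ l, lam l t * ∑ i, ∑ j, v l t i * v l t j * Df i j (γ t) k) * γ' t k) t := by
  intro t ht
  have hnear : ∀ᶠ s in 𝓝 t, s ∈ Ioo 0 ε := isOpen_Ioo.mem_nhds ht
  have hw : ∀ l, HasDerivAt (fun s => (v l s).ofLp) (v' l t).ofLp t := fun l =>
    (PiLp.hasFDerivAt_ofLp 2 (v l t)).comp_hasDerivAt t (hvd l t ht)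
  have heigv : ∀ l, ∀ s ∈ Ioo 0 ε, F (γ s) *ᵥ (v l s).ofLp = f (γ s) • (v l s).ofLp :=
    fun l s hs => funext (heig l s hs)
  have hquad : ∀ l, ∀ s ∈ Ioo 0 ε, (v l s).ofLp ⬝ᵥ F (γ s) *ᵥ (v l s).ofLp = f (γ s) :=
    fun l s hs => dotProduct_mulVec_self_of_mulVec_eq_smul (heigv l s hs)
      (EuclideanSpace.dotProduct_self_ofLp_of_norm_eq_one (hvnorm l s hs))
  have horth : ∀ l, (v l t).ofLp ⬝ᵥ (v' l t).ofLp = 0 := fun l => by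
    simpa [EuclideanSpace.inner_eq_star_dotProduct, dotProduct_comm] using
      (hvd l t ht).inner_eq_zero_of_eventually_norm_const (hnear.mono (hvnorm l))
  have hderiv := fun l => (hw l).dotProduct_mulVec_self_of_eigenvector
    (fun i j => (hDf i j (γ t)).comp_hasDerivAt (hγ t ht))
    (Matrix.IsSymm.ext fun i j => hsym (γ t) j i) (heigv l t ht) (horth l)
  have hfγ : (fun s => ∑ l, lam l s * ((v l s).ofLp ⬝ᵥ F (γ s) *ᵥ (v l s).ofLp))
      =ᶠ[𝓝 t] fun s => f (γ s) := by
    filter_upwards [hnear] with s hs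
    simp only [hquad _ s hs, ← Finset.sum_mul, hlamsum s hs, one_mul]
  rw [sum_weighted_gradient_mul_eq_sum_dotProduct_mulVec]
  exact (hasDerivAt_sum_mul_of_sum_eq_one (fun l => hlamd l t ht) hderiv (hnear.mono hlamsum)
    fun l => hquad l t ht).congr_of_eventuallyEq hfγ.symm

/-- along differentiable curves of weights and unit eigenvectors,
`d/dt f(γ(t)) = ⟨u(t), γ'(t)⟩` where
`u(t) = Σ_l λ_l(t) Σ_{i,j} v_i^l(t) v_j^l(t) ∇f_{ij}(γ(t))`. -/
theorem deriv_largest_eigenvalue_along_curve {n p r : ℕ}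
    (F : EuclideanSpace ℝ (Fin n) → Matrix (Fin p) (Fin p) ℝ)
    (hpoly : ∀ i j, ∃ P : MvPolynomial (Fin n) ℝ,
      ∀ x : EuclideanSpace ℝ (Fin n), F x i j = MvPolynomial.eval (fun k => x k) P)
    (hsym : ∀ x i j, F x i j = F x j i)
    (f : EuclideanSpace ℝ (Fin n) → ℝ)
    (hf : ∀ x, IsLargestEigenvalue (F x) (f x))
    (Df : Fin p → Fin p → EuclideanSpace ℝ (Fin n) → EuclideanSpace ℝ (Fin n))
    (hDf : ∀ i j x, HasGradientAt (fun y => F y i j) (Df i j x) x)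
    (ε : ℝ) (hε : 0 < ε)
    (γ : ℝ → EuclideanSpace ℝ (Fin n)) (γ' : ℝ → EuclideanSpace ℝ (Fin n))
    (lam : Fin r → ℝ → ℝ) (lam' : Fin r → ℝ → ℝ)
    (v : Fin r → ℝ → EuclideanSpace ℝ (Fin p))
    (v' : Fin r → ℝ → EuclideanSpace ℝ (Fin p))
    (hγ : ∀ t ∈ Set.Ioo (0 : ℝ) ε, HasDerivAt γ (γ' t) t)
    (hlamd : ∀ l, ∀ t ∈ Set.Ioo (0 : ℝ) ε, HasDerivAt (lam l) (lam' l t) t)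
    (hvd : ∀ l, ∀ t ∈ Set.Ioo (0 : ℝ) ε, HasDerivAt (v l) (v' l t) t)
    (hlam0 : ∀ l, ∀ t ∈ Set.Ioo (0 : ℝ) ε, 0 ≤ lam l t)
    (hlamsum : ∀ t ∈ Set.Ioo (0 : ℝ) ε, ∑ l, lam l t = 1)
    (hvnorm : ∀ l, ∀ t ∈ Set.Ioo (0 : ℝ) ε, ‖v l t‖ = 1)
    (heig : ∀ l, ∀ t ∈ Set.Ioo (0 : ℝ) ε, ∀ i,
      ∑ j, F (γ t) i j * v l t j = f (γ t) * v l t i) :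
    ∀ t ∈ Set.Ioo (0 : ℝ) ε,
      HasDerivAt (fun s => f (γ s))
        (∑ k, (∑ l, lam l t * ∑ i, ∑ j, v l t i * v l t j * Df i j (γ t) k) * γ' t k) t :=
  deriv_largest_eigenvalue_along_curve_general F hsym f Df hDf ε γ γ' lam lam' v v' hγ hlamd hvd
    hlamsum hvnorm heig
end
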